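/- Let (X⁺, T) be a transitive locally compact one-sided countable Markov shift and φ a λ-transient potential with summable variations. Then for every cylinder [b₁,…,b_m], the Green's function x ↦ G(1_{[b₁,…,b_m]}, x | λ) is continuous on X⁺; moreover if x, y agree in their first N coordinates with N > m, then G(1_{[b₁,…,b_m]}, x | λ) = e^{±Σ_{k≥N} Var_k(φ)} G(1_{[b₁,…,b_m]}, y | λ). -/

import Mathlib

open MeasureTheory ENNReal Filter Topology

variable {S : Type*}

/-- The one-sided topological Markov shift over alphabet `S` with transition relation `Adj`. -/
abbrev MShift (Adj : S → S → Prop) : Type _ :=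
  {x : ℕ → S // ∀ i, Adj (x i) (x (i + 1))}

/-- The left shift map. -/
def shiftMap (Adj : S → S → Prop) (x : MShift Adj) : MShift Adj :=
  ⟨fun i => x.1 (i + 1), fun i => x.2 (i + 1)⟩

/-- The Ruelle (transfer) operator on non-negative functions. -/
noncomputable def Ruelle (Adj : S → S → Prop) (φ : MShift Adj → ℝ)
    (f : MShift Adj → ℝ≥0∞) (x : MShift Adj) : ℝ≥0∞ :=
  ∑' y : {y : MShift Adj // shiftMap Adj y = x}, ENNReal.ofReal (Real.exp (φ y.1)) * f y.1

/-- The Green's function `G(f, x | λ) = Σ_n λ⁻ⁿ (L_φⁿ f)(x)`. -/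
noncomputable def Green (Adj : S → S → Prop) (φ : MShift Adj → ℝ) (lam : ℝ)
    (f : MShift Adj → ℝ≥0∞) (x : MShift Adj) : ℝ≥0∞ :=
  ∑' n : ℕ, ENNReal.ofReal ((lam ^ n)⁻¹) * ((Ruelle Adj φ)^[n] f) x

/-- The cylinder set `[a] = {x : x₀ = a}`. -/
def cylA (Adj : S → S → Prop) (a : S) : Set (MShift Adj) := {x | x.1 0 = a}

/-- Indicator function of the cylinder `[a]`. -/
noncomputable def cylInd (Adj : S → S → Prop) (a : S) : MShift Adj → ℝ≥0∞ :=
  (cylA Adj a).indicator 1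

/-- Topological transitivity: every state can be reached from every state. -/
def TransitiveShift (Adj : S → S → Prop) : Prop :=
  ∀ a b : S, ∃ (n : ℕ) (x : MShift Adj), x.1 0 = a ∧ ((shiftMap Adj)^[n] x).1 0 = b

/-- Local compactness: each state has finitely many followers. -/
def LocFin (Adj : S → S → Prop) : Prop := ∀ a : S, {b : S | Adj a b}.Finite

/-- Set of values `|φ(x) − φ(y)|` over pairs agreeing in their first `m` coordinates. -/
def varSet (Adj : S → S → Prop) (φ : MShift Adj → ℝ) (m : ℕ) : Set ℝ :=
  {r | ∃ x y : MShift Adj, (∀ i < m, x.1 i = y.1 i) ∧ r = |φ x - φ y|}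

/-- The `m`-th variation of `φ`. -/
noncomputable def Var (Adj : S → S → Prop) (φ : MShift Adj → ℝ) (m : ℕ) : ℝ :=
  sSup (varSet Adj φ m)

/-- `φ` has summable variations. -/
def SummableVar (Adj : S → S → Prop) (φ : MShift Adj → ℝ) : Prop :=
  (∀ m, BddAbove (varSet Adj φ m)) ∧ Summable (Var Adj φ)

/-- A non-negative real function viewed as `ℝ≥0∞`-valued. -/
noncomputable def ofR {Adj : S → S → Prop} (f : MShift Adj → ℝ) : MShift Adj → ℝ≥0∞ :=
  fun x => ENNReal.ofReal (f x)

/-- `λ`-transience: the Green's function of every cylinder is finite everywhere. -/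
def Transient (Adj : S → S → Prop) (φ : MShift Adj → ℝ) (lam : ℝ) : Prop :=
  ∀ (a : S) (x : MShift Adj), Green Adj φ lam (cylInd Adj a) x ≠ ⊤

/-- The cylinder on a word `w` of length `m`. -/
def cylW (Adj : S → S → Prop) (m : ℕ) (w : Fin m → S) : Set (MShift Adj) :=
  {x | ∀ i : Fin m, x.1 i = w i}

/-!
Write `Lⁿ f (x)` as the sum of `e^{Sₙφ(z)} f(z)` over the `n`-th preimages `z` of `x`. When `x`
and `y` agree in their first `N > m` coordinates, replacing the tail `x` of each preimage
`z = z₀ … z_{n-1} x` by `y` injects the preimages of `x` into those of `y`. The new preimage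
agrees with `z` for `n + N` steps, so it lies in `[w]` iff `z` does, and by summable variations
its Birkhoff sum differs from `Sₙφ(z)` by at most `∑_{k ≥ N} Var_k φ`. Summing over `n` gives
the two-sided bound; as the tails tend to `0` and cylinders are open, the bound forces
continuity, also at points where `G = ∞`.
-/

lemma ENNReal.continuousAt_of_eventually_le_mul {α ι : Type*} [TopologicalSpace α]
    {l : Filter ι} [l.NeBot] {G : α → ℝ≥0∞} {x : α} {C : ι → ℝ≥0∞}
    (hC : Tendsto C l (𝓝 1)) (hC0 : ∀ N, C N ≠ 0) (hCtop : ∀ N, C N ≠ ⊤)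
    (h : ∀ᶠ N in l, ∀ᶠ y in 𝓝 x, G x ≤ C N * G y ∧ G y ≤ C N * G x) :
    ContinuousAt G x := by
  have hmul : Tendsto (fun N => C N * G x) l (𝓝 (G x)) := by
    simpa using ENNReal.Tendsto.mul_const hC (Or.inl one_ne_zero)
  have hinv : Tendsto (fun N => (C N)⁻¹ * G x) l (𝓝 (G x)) := by
    simpa using ENNReal.Tendsto.mul_const (tendsto_inv_iff.2 hC) (Or.inl (by simp))
  refine tendsto_order.2 ⟨fun a ha => ?_, fun b hb => ?_⟩
  · obtain ⟨N, hN, hlt⟩ := (h.and (hinv.eventually (lt_mem_nhds ha))).exists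
    filter_upwards [hN] with y hy
    exact hlt.trans_le ((ENNReal.inv_mul_le_iff (hC0 N) (hCtop N)).2 hy.1)
  · obtain ⟨N, hN, hlt⟩ := (h.and (hmul.eventually (gt_mem_nhds hb))).exists
    filter_upwards [hN] with y hy
    exact hy.2.trans_lt hlt

section Shift

variable {Adj : S → S → Prop}

lemma shiftMap_iterate_apply (n : ℕ) (z : MShift Adj) (i : ℕ) :
    ((shiftMap Adj)^[n] z).1 i = z.1 (n + i) := by
  induction n generalizing z with
  | zero => simp
  | succ n ih =>
    rw [Function.iterate_succ_apply, ih]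
    exact congrArg z.1 (by omega)

lemma apply_of_shiftMap_iterate_eq {n : ℕ} {z x : MShift Adj} (hz : (shiftMap Adj)^[n] z = x)
    {i : ℕ} (hi : n ≤ i) : z.1 i = x.1 (i - n) := by
  rw [← hz, shiftMap_iterate_apply, Nat.add_sub_cancel' hi]

lemma eq_of_shiftMap_iterate_eq {n : ℕ} {z z' : MShift Adj}
    (h : (shiftMap Adj)^[n] z = (shiftMap Adj)^[n] z') (hlt : ∀ i < n, z.1 i = z'.1 i) :
    z = z' := by
  refine Subtype.ext (funext fun i => ?_)
  rcases lt_or_ge i n with hi | hi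
  · exact hlt i hi
  · rw [apply_of_shiftMap_iterate_eq rfl hi, apply_of_shiftMap_iterate_eq rfl hi, h]

lemma ruelle_iterate_apply (φ : MShift Adj → ℝ) (f : MShift Adj → ℝ≥0∞) (n : ℕ)
    (x : MShift Adj) :
    (Ruelle Adj φ)^[n] f x = ∑' z : {z // (shiftMap Adj)^[n] z = x},
      ENNReal.ofReal (Real.exp (birkhoffSum (shiftMap Adj) φ n z)) * f z := by
  induction n generalizing x with
  | zero =>
    simp only [Function.iterate_zero_apply, birkhoffSum_zero, Real.exp_zero, ofReal_one, one_mul,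
      tsum_fintype, Fintype.sum_unique]
    rfl
  | succ n ih =>
    let e := Equiv.sigmaSubtypeFiberEquivSubtype ((shiftMap Adj)^[n])
      (p := fun z => (shiftMap Adj)^[n + 1] z = x) (q := fun y => shiftMap Adj y = x)
      fun z => by rw [Function.iterate_succ_apply']
    rw [Function.iterate_succ_apply', Ruelle, ← e.tsum_eq, ENNReal.tsum_sigma']
    refine tsum_congr fun y => ?_
    rw [ih, ← ENNReal.tsum_mul_left]
    refine tsum_congr fun z => ?_
    have he : (e ⟨y, z⟩ : MShift Adj) = z := rfl
    rw [he, birkhoffSum_succ, z.2, Real.exp_add, ENNReal.ofReal_mul (Real.exp_nonneg _)]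
    ring

def splice (n : ℕ) (z y : MShift Adj) (h : z.1 n = y.1 0) : MShift Adj :=
  ⟨fun i => if i < n then z.1 i else y.1 (i - n), fun i => by
    rcases lt_trichotomy (i + 1) n with hi | hi | hi
    · simpa [hi, show i < n by omega] using z.2 i
    · simpa [hi, ← h, show i < n by omega] using z.2 i
    · simpa [show ¬i < n by omega, show ¬i + 1 < n by omega,
        show i + 1 - n = i - n + 1 by omega] using y.2 (i - n)⟩

lemma splice_apply_of_lt {n : ℕ} {z y : MShift Adj} {h : z.1 n = y.1 0} {i : ℕ} (hi : i < n) :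
    (splice n z y h).1 i = z.1 i :=
  if_pos hi

lemma shiftMap_iterate_splice {n : ℕ} {z y : MShift Adj} (h : z.1 n = y.1 0) :
    (shiftMap Adj)^[n] (splice n z y h) = y :=
  Subtype.ext <| funext fun i => by
    rw [shiftMap_iterate_apply]
    exact (if_neg (by omega)).trans (congrArg y.1 (by omega))

def spliceFiber (n : ℕ) {x y : MShift Adj} (h0 : x.1 0 = y.1 0)
    (z : {z // (shiftMap Adj)^[n] z = x}) : {z // (shiftMap Adj)^[n] z = y} :=
  ⟨splice n z y ((apply_of_shiftMap_iterate_eq z.2 le_rfl).trans (by simpa using h0)),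
    shiftMap_iterate_splice _⟩

lemma spliceFiber_injective (n : ℕ) {x y : MShift Adj} (h0 : x.1 0 = y.1 0) :
    Function.Injective (spliceFiber n h0) := by
  intro z z' h
  refine Subtype.ext (eq_of_shiftMap_iterate_eq (z.2.trans z'.2.symm) fun i hi => ?_)
  have := congrArg (fun u => u.1.1 i) h
  simpa [spliceFiber, splice_apply_of_lt hi] using this

lemma spliceFiber_apply_of_lt {n N : ℕ} {x y : MShift Adj} (h0 : x.1 0 = y.1 0)
    (hxy : ∀ i < N, x.1 i = y.1 i) (z : {z // (shiftMap Adj)^[n] z = x}) {i : ℕ}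
    (hi : i < n + N) : (spliceFiber n h0 z).1.1 i = z.1.1 i := by
  rcases lt_or_ge i n with hin | hin
  · exact if_pos hin
  · rw [apply_of_shiftMap_iterate_eq (spliceFiber n h0 z).2 hin,
      apply_of_shiftMap_iterate_eq z.2 hin]
    exact (hxy _ (by omega)).symm

section Variation

variable {φ : MShift Adj → ℝ}

lemma abs_sub_le_var (hφ : ∀ m, BddAbove (varSet Adj φ m)) {m : ℕ} {u v : MShift Adj}
    (h : ∀ i < m, u.1 i = v.1 i) : |φ u - φ v| ≤ Var Adj φ m :=
  le_csSup (hφ m) ⟨u, v, h, rfl⟩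

lemma var_nonneg (hφ : ∀ m, BddAbove (varSet Adj φ m)) (u : MShift Adj) (m : ℕ) :
    0 ≤ Var Adj φ m :=
  (abs_nonneg _).trans (abs_sub_le_var hφ (u := u) (v := u) fun _ _ => rfl)

lemma birkhoffSum_le_add_tsum_var (hφ : SummableVar Adj φ) {n N : ℕ} {z z' : MShift Adj}
    (h : ∀ i < n + N, z.1 i = z'.1 i) :
    birkhoffSum (shiftMap Adj) φ n z
      ≤ birkhoffSum (shiftMap Adj) φ n z' + ∑' k, Var Adj φ (N + k) := by
  have hnonneg k : 0 ≤ Var Adj φ (N + k) := var_nonneg hφ.1 z _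
  have hterm : ∀ i < n, φ ((shiftMap Adj)^[i] z) - φ ((shiftMap Adj)^[i] z')
      ≤ Var Adj φ (N + (n - 1 - i + 1)) := fun i hi =>
    (le_abs_self _).trans <| abs_sub_le_var hφ.1 fun j hj => by
      rw [shiftMap_iterate_apply, shiftMap_iterate_apply]
      exact h _ (by omega)
  rw [← sub_le_iff_le_add']
  calc birkhoffSum (shiftMap Adj) φ n z - birkhoffSum (shiftMap Adj) φ n z'
      ≤ ∑ i ∈ Finset.range n, Var Adj φ (N + (n - 1 - i + 1)) := by
        rw [birkhoffSum, birkhoffSum, ← Finset.sum_sub_distrib]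
        exact Finset.sum_le_sum fun i hi => hterm i (Finset.mem_range.1 hi)
    _ = ∑ k ∈ Finset.range n, Var Adj φ (N + (k + 1)) :=
        Finset.sum_range_reflect (fun k => Var Adj φ (N + (k + 1))) n
    _ ≤ ∑ k ∈ Finset.range (n + 1), Var Adj φ (N + k) := by
        rw [Finset.sum_range_succ']
        exact le_add_of_nonneg_right (hnonneg 0)
    _ ≤ ∑' k, Var Adj φ (N + k) :=
        Summable.sum_le_tsum _ (fun k _ => hnonneg k)
          ((summable_nat_add_iff N).2 hφ.2 |>.congr fun k => by rw [add_comm])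

def DependsOnFirst (N : ℕ) (f : MShift Adj → ℝ≥0∞) : Prop :=
  ∀ z z' : MShift Adj, (∀ i < N, z.1 i = z'.1 i) → f z = f z'

lemma DependsOnFirst.mono {N N' : ℕ} {f : MShift Adj → ℝ≥0∞} (hf : DependsOnFirst N f)
    (hN : N ≤ N') : DependsOnFirst N' f :=
  fun z z' h => hf z z' fun i hi => h i (by omega)

lemma dependsOnFirst_indicator_cylW (m : ℕ) (w : Fin m → S) :
    DependsOnFirst m ((cylW Adj m w).indicator (1 : MShift Adj → ℝ≥0∞)) := by
  intro z z' h
  have hmem : z ∈ cylW Adj m w ↔ z' ∈ cylW Adj m w :=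
    forall_congr' fun i => by rw [h i i.2]
  by_cases hz : z ∈ cylW Adj m w
  · rw [Set.indicator_of_mem hz, Set.indicator_of_mem (hmem.1 hz), Pi.one_apply, Pi.one_apply]
  · rw [Set.indicator_of_notMem hz, Set.indicator_of_notMem (mt hmem.2 hz)]

lemma ruelle_iterate_le_mul (hφ : SummableVar Adj φ) {N : ℕ} (hN : 0 < N)
    {f : MShift Adj → ℝ≥0∞} (hf : DependsOnFirst N f) {x y : MShift Adj}
    (hxy : ∀ i < N, x.1 i = y.1 i) (n : ℕ) :
    (Ruelle Adj φ)^[n] f x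
      ≤ ENNReal.ofReal (Real.exp (∑' k, Var Adj φ (N + k))) * (Ruelle Adj φ)^[n] f y := by
  set C := ENNReal.ofReal (Real.exp (∑' k, Var Adj φ (N + k)))
  have h0 : x.1 0 = y.1 0 := hxy 0 hN
  rw [ruelle_iterate_apply, ruelle_iterate_apply, ← ENNReal.tsum_mul_left]
  refine le_trans (ENNReal.tsum_le_tsum fun z => ?_)
    (ENNReal.tsum_comp_le_tsum_of_injective (spliceFiber_injective n h0)
      fun z => C * (ENNReal.ofReal (Real.exp (birkhoffSum (shiftMap Adj) φ n z)) * f z))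
  have hagree i (hi : i < n + N) : z.1.1 i = (spliceFiber n h0 z).1.1 i :=
    (spliceFiber_apply_of_lt h0 hxy z hi).symm
  rw [(hf.mono (Nat.le_add_left N n)) _ _ hagree, ← mul_assoc]
  refine mul_le_mul_left ?_ _
  rw [← ENNReal.ofReal_mul (Real.exp_nonneg _), ← Real.exp_add, add_comm]
  exact ENNReal.ofReal_le_ofReal (Real.exp_le_exp.2 (birkhoffSum_le_add_tsum_var hφ hagree))

lemma green_le_mul_green (hφ : SummableVar Adj φ) (lam : ℝ) {N : ℕ} (hN : 0 < N)
    {f : MShift Adj → ℝ≥0∞} (hf : DependsOnFirst N f) {x y : MShift Adj}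
    (hxy : ∀ i < N, x.1 i = y.1 i) :
    Green Adj φ lam f x
      ≤ ENNReal.ofReal (Real.exp (∑' k, Var Adj φ (N + k))) * Green Adj φ lam f y := by
  rw [Green, Green, ← ENNReal.tsum_mul_left]
  refine ENNReal.tsum_le_tsum fun n => ?_
  rw [mul_left_comm]
  exact mul_le_mul_right (ruelle_iterate_le_mul hφ hN hf hxy n) _

lemma green_indicator_cylW_le_mul (hφ : SummableVar Adj φ) (lam : ℝ) {m N : ℕ} (w : Fin m → S)
    (hmN : m < N) {x y : MShift Adj} (hxy : ∀ i < N, x.1 i = y.1 i) :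
    Green Adj φ lam ((cylW Adj m w).indicator 1) x
      ≤ ENNReal.ofReal (Real.exp (∑' k, Var Adj φ (N + k))) *
        Green Adj φ lam ((cylW Adj m w).indicator 1) y :=
  green_le_mul_green hφ lam (by omega) ((dependsOnFirst_indicator_cylW m w).mono hmN.le) hxy

end Variation

lemma eventually_nhds_forall_lt_eq [TopologicalSpace S] [DiscreteTopology S]
    (x : MShift Adj) (N : ℕ) : ∀ᶠ y in 𝓝 x, ∀ i < N, x.1 i = y.1 i := by
  have hcont : Continuous fun y : MShift Adj => fun i : Fin N => y.1 i :=
    continuous_pi fun i => (continuous_apply _).comp continuous_subtype_val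
  filter_upwards [hcont.continuousAt.preimage_mem_nhds
    ((isOpen_discrete {fun i : Fin N => x.1 i}).mem_nhds rfl)] with y hy i hi
  exact (congrFun hy ⟨i, hi⟩).symm

lemma tendsto_ofReal_exp_tsum_var (φ : MShift Adj → ℝ) :
    Tendsto (fun N => ENNReal.ofReal (Real.exp (∑' k, Var Adj φ (N + k)))) atTop (𝓝 1) := by
  have htail : Tendsto (fun N => ∑' k, Var Adj φ (N + k)) atTop (𝓝 0) := by
    simpa only [add_comm] using tendsto_sum_nat_add (Var Adj φ)
  simpa [Function.comp_def] using
    ((ENNReal.continuous_ofReal.comp Real.continuous_exp).tendsto 0).comp htail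

end Shift

theorem green_cylinder_continuous_general [TopologicalSpace S] [DiscreteTopology S]
    (Adj : S → S → Prop)
    (φ : MShift Adj → ℝ) (hvar : SummableVar Adj φ) (lam : ℝ)
    (m : ℕ) (w : Fin m → S) :
    Continuous (fun x => Green Adj φ lam ((cylW Adj m w).indicator 1) x) ∧
    ∀ N : ℕ, m < N → ∀ x y : MShift Adj, (∀ i < N, x.1 i = y.1 i) →
      Green Adj φ lam ((cylW Adj m w).indicator 1) x
          ≤ ENNReal.ofReal (Real.exp (∑' k : ℕ, Var Adj φ (N + k))) *
            Green Adj φ lam ((cylW Adj m w).indicator 1) y ∧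
      Green Adj φ lam ((cylW Adj m w).indicator 1) y
          ≤ ENNReal.ofReal (Real.exp (∑' k : ℕ, Var Adj φ (N + k))) *
            Green Adj φ lam ((cylW Adj m w).indicator 1) x := by
  have distortion N (hmN : m < N) (x y : MShift Adj) (hxy : ∀ i < N, x.1 i = y.1 i) :=
    And.intro (green_indicator_cylW_le_mul hvar lam w hmN hxy)
      (green_indicator_cylW_le_mul hvar lam w hmN fun i hi => (hxy i hi).symm)
  refine ⟨continuous_iff_continuousAt.2 fun x => ?_, distortion⟩
  refine ENNReal.continuousAt_of_eventually_le_mul (tendsto_ofReal_exp_tsum_var φ)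
    (fun _ => (ENNReal.ofReal_pos.2 (Real.exp_pos _)).ne') (fun _ => ENNReal.ofReal_ne_top) ?_
  filter_upwards [eventually_gt_atTop m] with N hmN
  filter_upwards [eventually_nhds_forall_lt_eq x N] with y hxy
  exact distortion N hmN x y hxy

/-- The Green's function of a word cylinder is continuous, and satisfies the distortion
bound `G(1_w, x|λ) = e^{±Σ_{k ≥ N} Var_k(φ)} G(1_w, y|λ)` whenever `x, y` agree in their
first `N > m` coordinates. -/
theorem green_cylinder_continuous [Countable S] [TopologicalSpace S] [DiscreteTopology S]
    (Adj : S → S → Prop) (htrans : TransitiveShift Adj) (hloc : LocFin Adj)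
    (φ : MShift Adj → ℝ) (hvar : SummableVar Adj φ) (lam : ℝ) (hlam : 0 < lam)
    (htransient : Transient Adj φ lam) (m : ℕ) (w : Fin m → S) :
    Continuous (fun x => Green Adj φ lam ((cylW Adj m w).indicator 1) x) ∧
    ∀ N : ℕ, m < N → ∀ x y : MShift Adj, (∀ i < N, x.1 i = y.1 i) →
      Green Adj φ lam ((cylW Adj m w).indicator 1) x
          ≤ ENNReal.ofReal (Real.exp (∑' k : ℕ, Var Adj φ (N + k))) *
            Green Adj φ lam ((cylW Adj m w).indicator 1) y ∧
      Green Adj φ lam ((cylW Adj m w).indicator 1) y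
          ≤ ENNReal.ofReal (Real.exp (∑' k : ℕ, Var Adj φ (N + k))) *
            Green Adj φ lam ((cylW Adj m w).indicator 1) x :=
  green_cylinder_continuous_general Adj φ hvar lam m w
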